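/- arXiv:2302.00312 — 2 statements merged into one kernel-verified Lean document; each statement's English description precedes it below -/
import Mathlib

section
/- Let Φ : ℝ^n × ℝ^n × (ℝ^n \ {0}) → ℂ be smooth in y, and suppose that for fixed x, ξ one has Φ(x,x,ξ) = 0 and ∇_y Φ(x,y,ξ)|_{y=x} = 0, and that |∂_y^γ Φ(x,y,ξ)| ≤ C_γ ⟨ξ⟩ for all multi-indices γ with |γ| ≥ 2, where ⟨ξ⟩ = (1+|ξ|²)^{1/2}. Then for every multi-index γ, |∂_y^γ (e^{iΦ(x,y,ξ)})|_{y=x}| ≤ C ⟨ξ⟩^{|γ|/2}. -/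
open MeasureTheory

/-- Suppose `Φ(x,·,ξ)` is smooth, `Φ(x,x,ξ) = 0`, `∇_y Φ(x,y,ξ)|_{y=x} = 0`,
and all `y`-derivatives of order `≥ 2` are bounded by `C_k ⟨ξ⟩` (uniformly in `y, ξ`).
Then for every order `k`, `‖∂_y^k (e^{iΦ})|_{y=x}‖ ≤ C' ⟨ξ⟩^{k/2}` with `C'` independent of `ξ`.
(Here `⟨ξ⟩^{k/2} = (1+|ξ|²)^{k/4}`.) -/
theorem stmt3 (n : ℕ) (Φ : EuclideanSpace ℝ (Fin n) → EuclideanSpace ℝ (Fin n) →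
      EuclideanSpace ℝ (Fin n) → ℂ)
    (x : EuclideanSpace ℝ (Fin n))
    (hsmooth : ∀ ξ, ContDiff ℝ (⊤ : ℕ∞) (fun y => Φ x y ξ))
    (h0 : ∀ ξ, Φ x x ξ = 0)
    (h1 : ∀ ξ, fderiv ℝ (fun y => Φ x y ξ) x = 0)
    (C : ℕ → ℝ)
    (hC : ∀ k, 2 ≤ k → ∀ y ξ,
      ‖iteratedFDeriv ℝ k (fun y' => Φ x y' ξ) y‖ ≤ C k * (1 + ‖ξ‖ ^ 2) ^ ((1 : ℝ) / 2))
    (k : ℕ) :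
    ∃ C' : ℝ, ∀ ξ,
      ‖iteratedFDeriv ℝ k (fun y => Complex.exp (Complex.I * Φ x y ξ)) x‖ ≤
        C' * (1 + ‖ξ‖ ^ 2) ^ ((k : ℝ) / 4) := by
  classical
  -- constant bounding the real iterated derivatives of `exp` at `0`
  set Ce : ℝ := (Finset.range (k + 1)).sup' (by simp) (fun i => ‖iteratedFDeriv ℝ i Complex.exp 0‖) with hCe
  -- constant bounding the `C i`
  set M : ℝ := 1 + ∑ i ∈ Finset.range (k + 1), max (C i) 0 with hM
  have hM1 : (1 : ℝ) ≤ M := by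
    have : (0 : ℝ) ≤ ∑ i ∈ Finset.range (k + 1), max (C i) 0 :=
      Finset.sum_nonneg (fun i _ => le_max_right _ _)
    simp [hM]; linarith
  have hMC : ∀ i, i ≤ k → C i ≤ M := by
    intro i hi
    have h1' : max (C i) 0 ≤ ∑ j ∈ Finset.range (k + 1), max (C j) 0 :=
      Finset.single_le_sum (f := fun j => max (C j) 0) (fun j _ => le_max_right _ _)
        (Finset.mem_range.mpr (Nat.lt_succ_of_le hi))
    have := le_max_left (C i) 0
    simp only [hM]; linarith
  refine ⟨(k.factorial : ℝ) * Ce * M ^ k, fun ξ => ?_⟩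
  have ha1 : (1 : ℝ) ≤ 1 + ‖ξ‖ ^ 2 := le_add_of_nonneg_right (by positivity)
  have ha0 : (0 : ℝ) ≤ 1 + ‖ξ‖ ^ 2 := by positivity
  set D : ℝ := M * (1 + ‖ξ‖ ^ 2) ^ ((1 : ℝ) / 4) with hD
  have hD0 : 0 ≤ D := by positivity
  set f : EuclideanSpace ℝ (Fin n) → ℂ := fun y => Complex.I * Φ x y ξ with hf
  have hfC : ContDiff ℝ (⊤ : ℕ∞) f := (contDiff_const (c := Complex.I)).mul (hsmooth ξ)
  have hsmul : ∀ (i : ℕ) (y : EuclideanSpace ℝ (Fin n)),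
      iteratedFDeriv ℝ i f y = Complex.I • iteratedFDeriv ℝ i (fun y' => Φ x y' ξ) y := by
    intro i y
    have : f = fun y' => Complex.I • Φ x y' ξ := by
      ext y'; simp [hf, smul_eq_mul]
    rw [this]
    exact iteratedFDeriv_const_smul_apply' ((hsmooth ξ).of_le (by exact_mod_cast le_top)).contDiffAt
  -- bound on derivatives of exp at f x = 0
  have hfx0 : f x = 0 := by simp [hf, h0 ξ]
  have hCbound : ∀ i, i ≤ k → ‖iteratedFDeriv ℝ i Complex.exp (f x)‖ ≤ Ce := by
    intro i hi
    rw [hfx0]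
    exact Finset.le_sup' (f := fun i => ‖iteratedFDeriv ℝ i Complex.exp 0‖)
      (Finset.mem_range.mpr (Nat.lt_succ_of_le hi))
  -- bound on derivatives of f at x
  have hDbound : ∀ i, 1 ≤ i → i ≤ k → ‖iteratedFDeriv ℝ i f x‖ ≤ D ^ i := by
    intro i h1i hik
    rw [hsmul i x, norm_smul, Complex.norm_I, one_mul]
    rcases eq_or_lt_of_le h1i with h | h
    · -- i = 1 : derivative vanishes
      have hz : iteratedFDeriv ℝ 1 (fun y' => Φ x y' ξ) x = 0 := by
        ext m
        rw [iteratedFDeriv_one_apply]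
        simp [h1 ξ]
      rw [← h, hz]
      simp only [norm_zero]
      positivity
    · -- i ≥ 2
      have h2i : 2 ≤ i := h
      calc ‖iteratedFDeriv ℝ i (fun y' => Φ x y' ξ) x‖
          ≤ C i * (1 + ‖ξ‖ ^ 2) ^ ((1 : ℝ) / 2) := hC i h2i x ξ
        _ ≤ M ^ i * ((1 + ‖ξ‖ ^ 2) ^ ((1 : ℝ) / 4)) ^ i := by
            have hMi : C i ≤ M ^ i := (hMC i hik).trans (le_self_pow₀ hM1 (by omega))
            have hpow : ((1 + ‖ξ‖ ^ 2) ^ ((1 : ℝ) / 4)) ^ i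
                = (1 + ‖ξ‖ ^ 2) ^ ((i : ℝ) / 4) := by
              rw [← Real.rpow_natCast ((1 + ‖ξ‖ ^ 2) ^ ((1 : ℝ) / 4)) i,
                ← Real.rpow_mul ha0]
              ring_nf
            rw [hpow]
            have hexp : (1 + ‖ξ‖ ^ 2) ^ ((1 : ℝ) / 2) ≤ (1 + ‖ξ‖ ^ 2) ^ ((i : ℝ) / 4) := by
              apply Real.rpow_le_rpow_of_exponent_le ha1
              have : (2 : ℝ) ≤ (i : ℝ) := by exact_mod_cast h2i
              linarith
            have hCi0 : 0 ≤ C i := by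
              have := hC i h2i x ξ
              nlinarith [norm_nonneg (iteratedFDeriv ℝ i (fun y' => Φ x y' ξ) x),
                Real.rpow_pos_of_pos (lt_of_lt_of_le one_pos ha1) ((1 : ℝ) / 2)]
            have h2 : (0:ℝ) < (1 + ‖ξ‖ ^ 2) ^ ((1 : ℝ) / 2) :=
              Real.rpow_pos_of_pos (lt_of_lt_of_le one_pos ha1) _
            calc C i * (1 + ‖ξ‖ ^ 2) ^ ((1 : ℝ) / 2)
                ≤ M ^ i * (1 + ‖ξ‖ ^ 2) ^ ((1 : ℝ) / 2) := by
                  apply mul_le_mul_of_nonneg_right hMi h2.le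
              _ ≤ M ^ i * (1 + ‖ξ‖ ^ 2) ^ ((i : ℝ) / 4) := by
                  apply mul_le_mul_of_nonneg_left hexp
                  positivity
        _ = D ^ i := by rw [hD, mul_pow]
  have key := norm_iteratedFDeriv_comp_le (𝕜 := ℝ) (g := Complex.exp) (f := f)
    (N := (⊤ : ℕ∞)) Complex.contDiff_exp (hfC.of_le (by simp)) (by exact_mod_cast le_top) x hCbound hDbound
  have hcomp : (Complex.exp ∘ f) = fun y => Complex.exp (Complex.I * Φ x y ξ) := by
    ext y; simp [hf, Function.comp]
  rw [hcomp] at key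
  calc ‖iteratedFDeriv ℝ k (fun y => Complex.exp (Complex.I * Φ x y ξ)) x‖
      ≤ (k.factorial : ℝ) * Ce * D ^ k := key
    _ = (k.factorial : ℝ) * Ce * (M ^ k * ((1 + ‖ξ‖ ^ 2) ^ ((1 : ℝ) / 4)) ^ k) := by
        rw [hD, mul_pow]
    _ = (k.factorial : ℝ) * Ce * M ^ k * (1 + ‖ξ‖ ^ 2) ^ ((k : ℝ) / 4) := by
        rw [← Real.rpow_natCast ((1 + ‖ξ‖ ^ 2) ^ ((1 : ℝ) / 4)) k, ← Real.rpow_mul ha0]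
        ring_nf
end

section
/- Let 0 ≤ ρ ≤ 1, 0 ≤ δ < 1, m ∈ ℝ, let a ∈ S^m_{ρ,δ}(ℝ^n) and let φ(x,ξ) ∈ Φ² be SND. Set m' := m + n·max{0, (δ−ρ)/2} and suppose m' ≤ 0. Then the FIO T_a^φ f(x) = ∫ e^{iφ(x,ξ)} a(x,ξ) f̂(ξ) đξ satisfies ‖T_a^φ f‖_{L²(ℝ^n)} ≤ C ‖f‖_{h^{2n/(n − 2m')}(ℝ^n)}, assuming as given the two facts: (A) any FIO with SND phase in Φ² and amplitude in S^{−n·max{0,(δ−ρ)/2}}_{ρ,δ} is L²-bounded, and (B) the Bessel potential embedding ‖(1−Δ)^{m'/2} g‖_{L²} ≤ C‖g‖_{h^{2n/(n−2m')}} for m' ≤ 0. -/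
open MeasureTheory
open scoped ENNReal NNReal

/-- `⟨ξ⟩ = (1 + |ξ|²)^{1/2}`. -/
noncomputable def jap (n : ℕ) (ξ : EuclideanSpace ℝ (Fin n)) : ℝ :=
  (1 + ‖ξ‖ ^ 2) ^ ((1 : ℝ) / 2)

/-- The Hörmander symbol class `S^m_{ρ,δ}(ℝ^n)`:
`|∂_ξ^α ∂_x^β a(x,ξ)| ≤ C ⟨ξ⟩^{m - ρ|α| + δ|β|}`. -/
def SymbolClass (n : ℕ) (m ρ δ : ℝ)
    (a : EuclideanSpace ℝ (Fin n) → EuclideanSpace ℝ (Fin n) → ℂ) : Prop :=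
  ContDiff ℝ (⊤ : ℕ∞) (fun p : EuclideanSpace ℝ (Fin n) × EuclideanSpace ℝ (Fin n) => a p.1 p.2) ∧
  ∀ k l : ℕ, ∃ C : ℝ, ∀ x ξ : EuclideanSpace ℝ (Fin n),
    ‖iteratedFDeriv ℝ l (fun x' => iteratedFDeriv ℝ k (fun ξ' => a x' ξ') ξ) x‖ ≤
      C * jap n ξ ^ (m - ρ * (k : ℝ) + δ * (l : ℝ))

/-- The phase class `Φ²`: `φ` is smooth away from `ξ = 0`, positively homogeneous of
degree `1` in `ξ`, and `|∂_ξ^α ∂_x^β φ(x,ξ)| ≤ C |ξ|^{1-|α|}` for `|α| + |β| ≥ 2`. -/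
def Phi2Class (n : ℕ)
    (φ : EuclideanSpace ℝ (Fin n) → EuclideanSpace ℝ (Fin n) → ℝ) : Prop :=
  ContDiffOn ℝ (⊤ : ℕ∞) (fun p : EuclideanSpace ℝ (Fin n) × EuclideanSpace ℝ (Fin n) => φ p.1 p.2)
    {p | p.2 ≠ 0} ∧
  (∀ (x ξ : EuclideanSpace ℝ (Fin n)), ξ ≠ 0 → ∀ t : ℝ, 0 < t → φ x (t • ξ) = t * φ x ξ) ∧
  ∀ k l : ℕ, 2 ≤ k + l → ∃ C : ℝ, ∀ (x ξ : EuclideanSpace ℝ (Fin n)), ξ ≠ 0 →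
    ‖iteratedFDeriv ℝ l (fun x' =>
        iteratedFDerivWithin ℝ k (fun ξ' => φ x' ξ')
          {ξ' : EuclideanSpace ℝ (Fin n) | ξ' ≠ 0} ξ) x‖ ≤ C * ‖ξ‖ ^ ((1 : ℝ) - (k : ℝ))

/-- The strong non-degeneracy (SND) condition: `|det ∂²_{xξ} φ(x,ξ)| ≥ δ₀ > 0`. -/
def SNDClass (n : ℕ)
    (φ : EuclideanSpace ℝ (Fin n) → EuclideanSpace ℝ (Fin n) → ℝ) : Prop :=
  ∃ δ₀ : ℝ, 0 < δ₀ ∧ ∀ (x ξ : EuclideanSpace ℝ (Fin n)), ξ ≠ 0 →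
    δ₀ ≤ |Matrix.det (Matrix.of fun i j : Fin n =>
      fderiv ℝ (fun x' => fderiv ℝ (fun ξ' => φ x' ξ') ξ (EuclideanSpace.single j 1)) x
        (EuclideanSpace.single i 1))|

/-- The Fourier transform `f̂(ξ) = ∫ e^{-i x·ξ} f(x) dx`. -/
noncomputable def paperFT (n : ℕ) (f : EuclideanSpace ℝ (Fin n) → ℂ)
    (ξ : EuclideanSpace ℝ (Fin n)) : ℂ :=
  ∫ x, Complex.exp (-(Complex.I) * ((inner ℝ x ξ : ℝ) : ℂ)) * f x

/-- The Fourier integral operator `T_a^φ f(x) = (2π)^{-n} ∫ e^{iφ(x,ξ)} a(x,ξ) f̂(ξ) dξ`. -/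
noncomputable def FIOapp (n : ℕ)
    (a : EuclideanSpace ℝ (Fin n) → EuclideanSpace ℝ (Fin n) → ℂ)
    (φ : EuclideanSpace ℝ (Fin n) → EuclideanSpace ℝ (Fin n) → ℝ)
    (f : SchwartzMap (EuclideanSpace ℝ (Fin n)) ℂ) (x : EuclideanSpace ℝ (Fin n)) : ℂ :=
  ((2 * Real.pi) ^ n : ℝ)⁻¹ •
    ∫ ξ, Complex.exp (Complex.I * ((φ x ξ : ℝ) : ℂ)) * a x ξ * paperFT n (⇑f) ξ

/-- The Bessel potential `(1-Δ)^{s/2} f(x) = (2π)^{-n} ∫ e^{i x·ξ} ⟨ξ⟩^s f̂(ξ) dξ`. -/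
noncomputable def Bop (n : ℕ) (s : ℝ)
    (f : SchwartzMap (EuclideanSpace ℝ (Fin n)) ℂ) (x : EuclideanSpace ℝ (Fin n)) : ℂ :=
  ((2 * Real.pi) ^ n : ℝ)⁻¹ •
    ∫ ξ, Complex.exp (Complex.I * ((inner ℝ x ξ : ℝ) : ℂ)) * ((jap n ξ ^ s : ℝ) : ℂ) *
      paperFT n (⇑f) ξ


open Function SchwartzMap
open scoped ContDiff FourierTransform RealInnerProductSpace
set_option maxHeartbeats 4000000
set_option synthInstance.maxHeartbeats 1000000

noncomputable section Stmt18Aux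

variable {n : ℕ}

local notation "E'" => EuclideanSpace ℝ (Fin n)

/-- scaled bracket squared -/
def uc (n : ℕ) (c : ℝ) (ξ : EuclideanSpace ℝ (Fin n)) : ℝ := 1 + ‖c • ξ‖ ^ 2

lemma uc_pos (c : ℝ) (ξ : E') : 0 < uc n c ξ := by unfold uc; positivity

lemma one_le_uc (c : ℝ) (ξ : E') : 1 ≤ uc n c ξ := by
  have : (0:ℝ) ≤ ‖c • ξ‖ ^ 2 := by positivity
  unfold uc; linarith

lemma contDiff_uc (c : ℝ) : ContDiff ℝ ω (fun ξ : E' => uc n c ξ) := by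
  exact contDiff_const.add ((contDiff_norm_sq ℝ).comp (contDiff_const_smul c))

lemma contDiff_uc_rpow (c s : ℝ) : ContDiff ℝ ω (fun ξ : E' => uc n c ξ ^ s) := by
  rw [contDiff_iff_contDiffAt]
  intro ξ
  exact (Real.contDiffAt_rpow_const_of_ne (uc_pos c ξ).ne').comp ξ (contDiff_uc c).contDiffAt

lemma hasFDerivAt_ucs (c s : ℝ) (ξ : E') :
    HasFDerivAt (fun ζ : E' => uc n c ζ ^ s)
      ((s * (2 * c ^ 2) * uc n c ξ ^ (s - 1)) • (innerSL ℝ ξ)) ξ := by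
  have h1 : HasFDerivAt (fun ζ : E' => c • ζ) (c • ContinuousLinearMap.id ℝ E') ξ :=
    (hasFDerivAt_id ξ).const_smul c
  have h2 : HasFDerivAt (fun ζ : E' => uc n c ζ)
      ((2:ℕ) • (innerSL ℝ (c • ξ)).comp (c • ContinuousLinearMap.id ℝ E')) ξ :=
    (h1.norm_sq).const_add 1
  have h3 : HasDerivAt (fun t : ℝ => t ^ s) (s * uc n c ξ ^ (s - 1)) (uc n c ξ) :=
    Real.hasDerivAt_rpow_const (Or.inl (uc_pos c ξ).ne')
  have h4 := h3.comp_hasFDerivAt ξ h2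
  refine h4.congr_fderiv ?_
  ext v
  simp [real_inner_smul_left, inner_smul_right, smul_smul]
  ring

lemma fderiv_ucs (c s : ℝ) :
    fderiv ℝ (fun ζ : E' => uc n c ζ ^ s)
      = fun ξ => (s * (2 * c ^ 2) * uc n c ξ ^ (s - 1)) • (innerSL ℝ ξ : E' →L[ℝ] ℝ) :=
  funext fun ξ => (hasFDerivAt_ucs c s ξ).fderiv

lemma innerSL_iter_bound (c : ℝ) (hc : c ≠ 0) (j : ℕ) (ξ : E') :
    ‖iteratedFDeriv ℝ j (fun ζ : E' => (innerSL ℝ ζ : E' →L[ℝ] ℝ)) ξ‖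
      ≤ max 1 |c|⁻¹ * uc n c ξ ^ ((1 - (j:ℝ)) / 2) := by
  have hu := uc_pos (n := n) c ξ
  match j with
  | 0 =>
    rw [norm_iteratedFDeriv_zero, innerSL_apply_norm]
    have h1 : ‖ξ‖ = |c|⁻¹ * ‖c • ξ‖ := by
      rw [norm_smul, Real.norm_eq_abs]; field_simp [abs_ne_zero.mpr hc]
    have h2 : ‖c • ξ‖ ≤ uc n c ξ ^ ((1:ℝ)/2) := by
      rw [← Real.sqrt_eq_rpow, Real.le_sqrt (norm_nonneg _)]
      all_goals unfold uc; nlinarith [sq_nonneg ‖c • ξ‖]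
    calc ‖ξ‖ = |c|⁻¹ * ‖c • ξ‖ := h1
      _ ≤ |c|⁻¹ * uc n c ξ ^ ((1:ℝ)/2) := by
          exact mul_le_mul_of_nonneg_left h2 (by positivity)
          
      _ ≤ max 1 |c|⁻¹ * uc n c ξ ^ ((1 - (0:ℕ):ℝ)/2) := by
          norm_num
          exact mul_le_mul_of_nonneg_right (le_max_right _ _) (by positivity)
  | 1 =>
    have h0 : ‖iteratedFDeriv ℝ 1 (fun ζ : E' => (innerSL ℝ ζ : E' →L[ℝ] ℝ)) ξ‖
        = ‖iteratedFDeriv ℝ 0 (fderiv ℝ (fun ζ : E' => (innerSL ℝ ζ : E' →L[ℝ] ℝ))) ξ‖ :=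
      (norm_iteratedFDeriv_fderiv (n := 0)).symm
    rw [h0, norm_iteratedFDeriv_zero]
    have h1 : fderiv ℝ (fun ζ : E' => (innerSL ℝ ζ : E' →L[ℝ] ℝ)) ξ = innerSL ℝ :=
      (innerSL ℝ : E' →L[ℝ] E' →L[ℝ] ℝ).fderiv
    rw [h1]
    calc ‖(innerSL ℝ : E' →L[ℝ] E' →L[ℝ] ℝ)‖ ≤ 1 := norm_innerSL_le ℝ
      _ ≤ max 1 |c|⁻¹ * uc n c ξ ^ ((1 - (1:ℕ):ℝ)/2) := by
          have h2 : uc n c ξ ^ ((1 - (1:ℕ):ℝ)/2) = 1 := by norm_num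
          rw [h2, mul_one]; exact le_max_left _ _
  | (j+2) =>
    have h0 : ‖iteratedFDeriv ℝ (j+2) (fun ζ : E' => (innerSL ℝ ζ : E' →L[ℝ] ℝ)) ξ‖
        = ‖iteratedFDeriv ℝ (j+1) (fderiv ℝ (fun ζ : E' => (innerSL ℝ ζ : E' →L[ℝ] ℝ))) ξ‖ :=
      (norm_iteratedFDeriv_fderiv (n := j+1)).symm
    have h1 : fderiv ℝ (fun ζ : E' => (innerSL ℝ ζ : E' →L[ℝ] ℝ))
        = fun _ => innerSL ℝ := funext fun ζ => (innerSL ℝ : E' →L[ℝ] E' →L[ℝ] ℝ).fderiv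
    rw [h0, h1, iteratedFDeriv_const_of_ne (Nat.succ_ne_zero j)]
    simp only [Pi.zero_apply, norm_zero]
    positivity



lemma ucs_iter_bound (c : ℝ) (hc : c ≠ 0) :
    ∀ (j : ℕ) (s : ℝ), ∃ C : ℝ, 0 ≤ C ∧ ∀ i ≤ j, ∀ ξ : E',
      ‖iteratedFDeriv ℝ i (fun ζ : E' => uc n c ζ ^ s) ξ‖ ≤ C * uc n c ξ ^ (s - (i:ℝ)/2) := by
  intro j
  induction j with
  | zero =>
    intro s
    refine ⟨1, zero_le_one, ?_⟩
    intro i hi ξ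
    interval_cases i
    rw [norm_iteratedFDeriv_zero]
    have h0 := uc_pos (n := n) c ξ
    rw [Real.norm_eq_abs, abs_of_pos (Real.rpow_pos_of_pos h0 s)]
    simp
  | succ j ih =>
    intro s
    obtain ⟨C₂, hC₂0, hC₂⟩ := ih s
    obtain ⟨C, hC0, hC⟩ := ih (s - 1)
    set K : ℝ := max 1 |c|⁻¹ with hK
    have hK0 : 0 ≤ K := le_trans zero_le_one (le_max_left _ _)
    set A : ℝ := |s * (2 * c ^ 2)| with hA
    have hA0 : 0 ≤ A := abs_nonneg _
    refine ⟨max C₂ ((∑ i ∈ Finset.range (j + 1), (j.choose i : ℝ)) * (A * C * K)),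
      le_max_of_le_left hC₂0, ?_⟩
    intro i hi ξ
    have hu := uc_pos (n := n) c ξ
    rcases Nat.lt_or_ge i (j+1) with hlt | hge
    · -- i ≤ j : use ih at s
      refine le_trans (hC₂ i (Nat.lt_succ_iff.mp hlt) ξ) ?_
      exact mul_le_mul_of_nonneg_right (le_max_left _ _) (Real.rpow_pos_of_pos hu _).le
    · -- i = j + 1
      have hi' : i = j + 1 := le_antisymm hi hge
      subst hi'
      have h0 : ‖iteratedFDeriv ℝ (j+1) (fun ζ : E' => uc n c ζ ^ s) ξ‖
          = ‖iteratedFDeriv ℝ j (fderiv ℝ (fun ζ : E' => uc n c ζ ^ s)) ξ‖ :=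
        (norm_iteratedFDeriv_fderiv (n := j)).symm
      rw [h0, fderiv_ucs c s]
      have hsm : ContDiff ℝ ω (fun ξ : E' => s * (2 * c ^ 2) * uc n c ξ ^ (s-1)) :=
        contDiff_const.mul (contDiff_uc_rpow c (s-1))
      have hg : ContDiff ℝ ω (fun ζ : E' => (innerSL ℝ ζ : E' →L[ℝ] ℝ)) :=
        (innerSL ℝ : E' →L[ℝ] E' →L[ℝ] ℝ).contDiff
      have hb := norm_iteratedFDeriv_smul_le (𝕜 := ℝ)
        (f := fun ξ : E' => s * (2 * c ^ 2) * uc n c ξ ^ (s-1))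
        (g := fun ζ : E' => (innerSL ℝ ζ : E' →L[ℝ] ℝ)) hsm hg ξ (n := j) le_top
      refine le_trans hb ?_
      have hterm : ∀ i ∈ Finset.range (j+1),
          (j.choose i : ℝ) * ‖iteratedFDeriv ℝ i (fun ξ : E' => s * (2 * c ^ 2) * uc n c ξ ^ (s-1)) ξ‖
            * ‖iteratedFDeriv ℝ (j - i) (fun ζ : E' => (innerSL ℝ ζ : E' →L[ℝ] ℝ)) ξ‖
          ≤ (j.choose i : ℝ) * (A * C * K) * uc n c ξ ^ (s - ((j:ℝ)+1)/2) := by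
        intro i hi'
        have hij : i ≤ j := Nat.lt_succ_iff.mp (Finset.mem_range.mp hi')
        have e1 : ‖iteratedFDeriv ℝ i (fun ξ : E' => s * (2 * c ^ 2) * uc n c ξ ^ (s-1)) ξ‖
            ≤ A * (C * uc n c ξ ^ ((s-1) - (i:ℝ)/2)) := by
          have hrw : (fun ξ : E' => s * (2 * c ^ 2) * uc n c ξ ^ (s-1))
              = fun ξ : E' => (s * (2 * c ^ 2)) • (uc n c ξ ^ (s-1)) := by
            funext ζ; simp [smul_eq_mul]
          rw [hrw, iteratedFDeriv_const_smul_apply'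
            (((contDiff_uc_rpow c (s-1))).of_le le_top).contDiffAt, norm_smul]
          rw [Real.norm_eq_abs]
          exact mul_le_mul_of_nonneg_left (hC i hij ξ) hA0
        have e2 := innerSL_iter_bound (n := n) c hc (j - i) ξ
        calc (j.choose i : ℝ)
              * ‖iteratedFDeriv ℝ i (fun ξ : E' => s * (2 * c ^ 2) * uc n c ξ ^ (s-1)) ξ‖
              * ‖iteratedFDeriv ℝ (j - i) (fun ζ : E' => (innerSL ℝ ζ : E' →L[ℝ] ℝ)) ξ‖
            ≤ (j.choose i : ℝ) * (A * (C * uc n c ξ ^ ((s-1) - (i:ℝ)/2)))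
              * (K * uc n c ξ ^ ((1 - ((j-i : ℕ):ℝ)) / 2)) := by
              apply mul_le_mul
              · exact mul_le_mul_of_nonneg_left e1 (Nat.cast_nonneg _)
              · exact e2
              · exact norm_nonneg _
              · positivity
          _ = (j.choose i : ℝ) * (A * C * K) *
                (uc n c ξ ^ ((s-1) - (i:ℝ)/2) * uc n c ξ ^ ((1 - ((j-i : ℕ):ℝ)) / 2)) := by
              ring
          _ = (j.choose i : ℝ) * (A * C * K) * uc n c ξ ^ (s - ((j:ℝ)+1)/2) := by
              rw [← Real.rpow_add hu]
              congr 1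
              have : ((j - i : ℕ):ℝ) = (j:ℝ) - (i:ℝ) := by
                rw [Nat.cast_sub hij]
              rw [this]; ring
      refine le_trans (Finset.sum_le_sum hterm) ?_
      rw [← Finset.sum_mul, ← Finset.sum_mul]
      have : (↑(j+1):ℝ)/2 = ((j:ℝ)+1)/2 := by push_cast; ring
      rw [this]
      exact mul_le_mul_of_nonneg_right (le_max_right _ _) (Real.rpow_pos_of_pos hu _).le

-- jap basics
lemma uc_one_eq (ξ : E') : uc n 1 ξ = 1 + ‖ξ‖ ^ 2 := by unfold uc; rw [one_smul]

lemma jap_eq_uc (ξ : E') : jap n ξ = uc n 1 ξ ^ ((1:ℝ)/2) := by rw [jap, uc_one_eq]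

lemma jap_pos (ξ : E') : 0 < jap n ξ := by
  rw [jap_eq_uc]; exact Real.rpow_pos_of_pos (uc_pos 1 ξ) _

lemma one_le_jap (ξ : E') : 1 ≤ jap n ξ := by
  rw [jap_eq_uc]; exact Real.one_le_rpow (one_le_uc 1 ξ) (by norm_num)

lemma jap_rpow (ξ : E') (e : ℝ) : jap n ξ ^ e = uc n 1 ξ ^ (e/2) := by
  rw [jap_eq_uc, ← Real.rpow_mul (uc_pos 1 ξ).le]
  congr 1
  ring

-- the complex multiplier function cc and its derivative bounds
lemma cc_iter_bound (ν : ℝ) (j : ℕ) :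
    ∃ C : ℝ, 0 ≤ C ∧ ∀ ξ : E',
      ‖iteratedFDeriv ℝ j (fun ζ : E' => ((uc n 1 ζ ^ (ν/2) : ℝ) : ℂ)) ξ‖
        ≤ C * jap n ξ ^ (ν - (j:ℝ)) := by
  obtain ⟨C, hC0, hC⟩ := ucs_iter_bound (n := n) 1 one_ne_zero j (ν/2)
  refine ⟨C, hC0, ?_⟩
  intro ξ
  have h1 : (fun ζ : E' => ((uc n 1 ζ ^ (ν/2) : ℝ) : ℂ))
      = ⇑(RCLike.ofRealLI (K := ℂ)) ∘ (fun ζ : E' => uc n 1 ζ ^ (ν/2)) := by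
    funext ζ
    simp [RCLike.ofRealLI_apply]
  rw [h1, LinearIsometry.norm_iteratedFDeriv_comp_left _ ((contDiff_uc_rpow 1 (ν/2))).contDiffAt le_top]
  refine le_trans (hC j le_rfl ξ) ?_
  rw [jap_rpow]
  apply le_of_eq
  congr 1
  ring

lemma contDiff_nested : ∀ (k : ℕ) {EX EY W : Type}
    [NormedAddCommGroup EX] [NormedSpace ℝ EX] [NormedAddCommGroup EY] [NormedSpace ℝ EY]
    [NormedAddCommGroup W] [NormedSpace ℝ W] (p : EX → EY → W),
    ContDiff ℝ ∞ (fun z : EX × EY => p z.1 z.2) →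
    ContDiff ℝ ∞ (fun z : EX × EY => iteratedFDeriv ℝ k (fun ξ' => p z.1 ξ') z.2) := by
  intro k
  induction k with
  | zero =>
    intro EX EY W _ _ _ _ _ _ p hp
    have h1 : (fun z : EX × EY => iteratedFDeriv ℝ 0 (fun ξ' => p z.1 ξ') z.2)
        = fun z : EX × EY => (continuousMultilinearCurryFin0 ℝ EY W).symm (p z.1 z.2) := by
      funext z
      rw [iteratedFDeriv_zero_eq_comp]
      rfl
    rw [h1]
    exact (((continuousMultilinearCurryFin0 ℝ EY W).symm.toContinuousLinearEquiv
      : W ≃L[ℝ] (EY [×0]→L[ℝ] W)).toContinuousLinearMap.contDiff).comp hp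
  | succ k ih =>
    intro EX EY W _ _ _ _ _ _ p hp
    have hp' : ContDiff ℝ ∞ (fun z : EX × EY => fderiv ℝ (fun ξ' => p z.1 ξ') z.2) := by
      apply ContDiff.fderiv (f := fun (z : EX × EY) (ξ : EY) => p z.1 ξ) (g := Prod.snd)
      · exact hp.comp (((contDiff_fst.comp contDiff_fst).prodMk contDiff_snd))
      · exact contDiff_snd
      · exact le_of_eq (by simp)
    have h1 : (fun z : EX × EY => iteratedFDeriv ℝ (k+1) (fun ξ' => p z.1 ξ') z.2)
        = fun z : EX × EY => (continuousMultilinearCurryRightEquiv' ℝ k EY W).symm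
            (iteratedFDeriv ℝ k (fun ξ' => fderiv ℝ (fun ζ => p z.1 ζ) ξ') z.2) := by
      funext z
      rw [iteratedFDeriv_succ_eq_comp_right]
      rfl
    rw [h1]
    have h2 := ih (fun (x : EX) (ξ : EY) => fderiv ℝ (fun ζ => p x ζ) ξ) hp'
    exact ((((continuousMultilinearCurryRightEquiv' ℝ k EY W).symm).toContinuousLinearEquiv
      : _ ≃L[ℝ] _).toContinuousLinearMap.contDiff).comp h2

lemma nested_slice {EX EY W : Type}
    [NormedAddCommGroup EX] [NormedSpace ℝ EX] [NormedAddCommGroup EY] [NormedSpace ℝ EY]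
    [NormedAddCommGroup W] [NormedSpace ℝ W] (p : EX → EY → W)
    (hp : ContDiff ℝ ∞ (fun z : EX × EY => p z.1 z.2)) (k : ℕ) (ξ : EY) :
    ContDiff ℝ ∞ (fun x : EX => iteratedFDeriv ℝ k (fun ξ' => p x ξ') ξ) :=
  (contDiff_nested k p hp).comp (contDiff_id.prodMk contDiff_const)

lemma key : ∀ (ρ δ : ℝ), 0 ≤ ρ → ρ ≤ 1 →
    ∀ (k : ℕ) {W₁ W₂ W₃ : Type}
    [NormedAddCommGroup W₁] [NormedSpace ℝ W₁] [NormedAddCommGroup W₂] [NormedSpace ℝ W₂]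
    [NormedAddCommGroup W₃] [NormedSpace ℝ W₃]
    (B : W₁ →L[ℝ] W₂ →L[ℝ] W₃) (p : E' → E' → W₁) (q : E' → W₂) (μ ν : ℝ),
    ContDiff ℝ ∞ (fun z : E' × E' => p z.1 z.2) → ContDiff ℝ ∞ q →
    (∀ k' l' : ℕ, ∃ C : ℝ, 0 ≤ C ∧ ∀ x ξ : E',
      ‖iteratedFDeriv ℝ l' (fun x' => iteratedFDeriv ℝ k' (fun ξ' => p x' ξ') ξ) x‖
        ≤ C * jap n ξ ^ (μ - ρ * (k':ℝ) + δ * (l':ℝ))) →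
    (∀ j : ℕ, ∃ C : ℝ, 0 ≤ C ∧ ∀ ξ : E', ‖iteratedFDeriv ℝ j q ξ‖ ≤ C * jap n ξ ^ (ν - (j:ℝ))) →
    ∀ l : ℕ, ∃ C : ℝ, 0 ≤ C ∧ ∀ x ξ : E',
      ‖iteratedFDeriv ℝ l (fun x' => iteratedFDeriv ℝ k (fun ξ' => B (p x' ξ') (q ξ')) ξ) x‖
        ≤ C * jap n ξ ^ ((μ + ν) - ρ * (k:ℝ) + δ * (l:ℝ)) := by
  intro ρ δ hρ0' hρ1 k
  induction k with
  | zero =>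
    intro W₁ W₂ W₃ _ _ _ _ _ _ B p q μ ν hp hq hpB hqB l
    obtain ⟨Cp, hCp0, hCp⟩ := hpB 0 l
    obtain ⟨Cq, hCq0, hCq⟩ := hqB 0
    refine ⟨‖B.flip‖ * Cq * Cp, by positivity, ?_⟩
    intro x ξ
    have hjnn : ∀ e : ℝ, (0:ℝ) ≤ jap n ξ ^ e := fun e => (Real.rpow_pos_of_pos (jap_pos ξ) e).le
    have hq0 : ‖q ξ‖ ≤ Cq * jap n ξ ^ ν := by
      have := hCq ξ; rwa [norm_iteratedFDeriv_zero, Nat.cast_zero, sub_zero] at this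
    -- rewrite the inner 0-th derivative
    have h1 : (fun x' => iteratedFDeriv ℝ 0 (fun ξ' => B (p x' ξ') (q ξ')) ξ)
        = ⇑((continuousMultilinearCurryFin0 ℝ E' W₃).symm)
            ∘ (fun x' => (B.flip (q ξ)) (p x' ξ)) := by
      funext x'
      rw [comp_apply, iteratedFDeriv_zero_eq_comp]
      simp
    rw [h1, LinearIsometryEquiv.norm_iteratedFDeriv_comp_left]
    -- CLM composition
    have h2 : (fun x' : E' => (B.flip (q ξ)) (p x' ξ))
        = ⇑(B.flip (q ξ)) ∘ (fun x' : E' => p x' ξ) := rfl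
    rw [h2]
    have hps : ContDiff ℝ ∞ (fun x' : E' => p x' ξ) :=
      hp.comp (contDiff_id.prodMk contDiff_const)
    rw [(B.flip (q ξ)).iteratedFDeriv_comp_left (hps.contDiffAt (x := x)) (i := l) (mod_cast le_top)]
    refine le_trans (ContinuousLinearMap.norm_compContinuousMultilinearMap_le _ _) ?_
    -- relate ‖D^l (fun x' => p x' ξ) x‖ to the nested bound
    have h4 : (fun x' : E' => p x' ξ)
        = ⇑(continuousMultilinearCurryFin0 ℝ E' W₁)
            ∘ (fun x' => iteratedFDeriv ℝ 0 (fun ξ' => p x' ξ') ξ) := by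
      funext x'
      rw [comp_apply, iteratedFDeriv_zero_eq_comp, comp_apply,
        LinearIsometryEquiv.apply_symm_apply]
    have h5 : ‖iteratedFDeriv ℝ l (fun x' : E' => p x' ξ) x‖
        ≤ Cp * jap n ξ ^ (μ - ρ * (0:ℝ) + δ * (l:ℝ)) := by
      rw [h4, LinearIsometryEquiv.norm_iteratedFDeriv_comp_left]
      simpa using hCp x ξ
    have hBf : ‖B.flip (q ξ)‖ ≤ ‖B.flip‖ * (Cq * jap n ξ ^ ν) := by
      refine le_trans (ContinuousLinearMap.le_opNorm _ _) ?_
      exact mul_le_mul_of_nonneg_left hq0 (norm_nonneg _)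
    calc ‖B.flip (q ξ)‖ * ‖iteratedFDeriv ℝ l (fun x' : E' => p x' ξ) x‖
        ≤ (‖B.flip‖ * (Cq * jap n ξ ^ ν)) * (Cp * jap n ξ ^ (μ - ρ * (0:ℝ) + δ * (l:ℝ))) := by
          apply mul_le_mul hBf h5 (norm_nonneg _)
          exact mul_nonneg (ContinuousLinearMap.opNorm_nonneg _) (mul_nonneg hCq0 (hjnn _))
      _ = ‖B.flip‖ * Cq * Cp * (jap n ξ ^ ν * jap n ξ ^ (μ - ρ * (0:ℝ) + δ * (l:ℝ))) := by ring
      _ = ‖B.flip‖ * Cq * Cp * jap n ξ ^ ((μ + ν) - ρ * ((0:ℕ):ℝ) + δ * (l:ℝ)) := by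
          rw [← Real.rpow_add (jap_pos ξ)]
          congr 1
          push_cast
          ring
  | succ k ih =>
    intro W₁ W₂ W₃ _ _ _ _ _ _ B p q μ ν hp hq hpB hqB l
    -- the derived functions
    set p' : E' → E' → (E' →L[ℝ] W₁) := fun x ξ => fderiv ℝ (fun ξ' => p x ξ') ξ with hp'def
    set q' : E' → (E' →L[ℝ] W₂) := fderiv ℝ q with hq'def
    have hp' : ContDiff ℝ ∞ (fun z : E' × E' => p' z.1 z.2) := by
      apply ContDiff.fderiv (f := fun (z : E' × E') (ξ : E') => p z.1 ξ) (g := Prod.snd)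
      · exact hp.comp (((contDiff_fst.comp contDiff_fst).prodMk contDiff_snd))
      · exact contDiff_snd
      · exact le_of_eq (by simp)
    have hq' : ContDiff ℝ ∞ q' := hq.fderiv_right (le_of_eq (by simp))
    -- nested bounds for p'
    have hp'B : ∀ k' l' : ℕ, ∃ C : ℝ, 0 ≤ C ∧ ∀ x ξ : E',
        ‖iteratedFDeriv ℝ l' (fun x' => iteratedFDeriv ℝ k' (fun ξ' => p' x' ξ') ξ) x‖
          ≤ C * jap n ξ ^ ((μ - ρ) - ρ * (k':ℝ) + δ * (l':ℝ)) := by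
      intro k' l'
      obtain ⟨C, hC0, hC⟩ := hpB (k'+1) l'
      refine ⟨C, hC0, ?_⟩
      intro x ξ
      have h6 : (fun x' => iteratedFDeriv ℝ k' (fun ξ' => p' x' ξ') ξ)
          = ⇑(continuousMultilinearCurryRightEquiv' ℝ k' E' W₁)
              ∘ (fun x' => iteratedFDeriv ℝ (k'+1) (fun ξ' => p x' ξ') ξ) := by
        funext x'
        rw [comp_apply, iteratedFDeriv_succ_eq_comp_right, comp_apply,
          LinearIsometryEquiv.apply_symm_apply]
      rw [h6, LinearIsometryEquiv.norm_iteratedFDeriv_comp_left]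
      refine le_trans (hC x ξ) ?_
      apply le_of_eq
      congr 1
      push_cast
      ring
    -- bounds for q'
    have hq'B : ∀ j : ℕ, ∃ C : ℝ, 0 ≤ C ∧ ∀ ξ : E',
        ‖iteratedFDeriv ℝ j q' ξ‖ ≤ C * jap n ξ ^ ((ν - 1) - (j:ℝ)) := by
      intro j
      obtain ⟨C, hC0, hC⟩ := hqB (j+1)
      refine ⟨C, hC0, ?_⟩
      intro ξ
      rw [hq'def, norm_iteratedFDeriv_fderiv]
      refine le_trans (hC ξ) ?_
      apply le_of_eq
      congr 1
      push_cast
      ring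
    obtain ⟨C₁, hC₁0, hC₁⟩ := ih (B.precompR E') p q' μ (ν-1) hp hq' hpB hq'B l
    obtain ⟨C₂, hC₂0, hC₂⟩ := ih (B.precompL E') p' q (μ-ρ) ν hp' hq hp'B hqB l
    refine ⟨C₁ + C₂, by positivity, ?_⟩
    intro x ξ
    -- joint smoothness of the two summands
    have hS1 : ContDiff ℝ ∞ (fun z : E' × E' => B.precompR E' (p z.1 z.2) (q' z.2)) :=
      (B.precompR E').isBoundedBilinearMap.contDiff.comp (hp.prodMk (hq'.comp contDiff_snd))
    have hS2 : ContDiff ℝ ∞ (fun z : E' × E' => B.precompL E' (p' z.1 z.2) (q z.2)) :=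
      (B.precompL E').isBoundedBilinearMap.contDiff.comp (hp'.prodMk (hq.comp contDiff_snd))
    -- inner rewrite
    have h7 : (fun x' => iteratedFDeriv ℝ (k+1) (fun ξ' => B (p x' ξ') (q ξ')) ξ)
        = ⇑((continuousMultilinearCurryRightEquiv' ℝ k E' W₃).symm)
          ∘ (fun x' =>
              iteratedFDeriv ℝ k (fun ξ' => B.precompR E' (p x' ξ') (q' ξ')) ξ
              + iteratedFDeriv ℝ k (fun ξ' => B.precompL E' (p' x' ξ') (q ξ')) ξ) := by
      funext x'
      rw [comp_apply, iteratedFDeriv_succ_eq_comp_right, comp_apply]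
      congr 1
      have hfd : (fun ξ' => fderiv ℝ (fun ζ => B (p x' ζ) (q ζ)) ξ')
          = fun ξ' => B.precompR E' (p x' ξ') (q' ξ') + B.precompL E' (p' x' ξ') (q ξ') := by
        funext ξ'
        apply ContinuousLinearMap.fderiv_of_bilinear
        · exact ((hp.comp (contDiff_const.prodMk contDiff_id)).differentiable (by simp)).differentiableAt
        · exact (hq.differentiable (by simp)).differentiableAt
      rw [hfd]
      apply iteratedFDeriv_add_apply'
      · exact ((hS1.comp (contDiff_const.prodMk contDiff_id)).of_le (mod_cast le_top)).contDiffAt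
      · exact ((hS2.comp (contDiff_const.prodMk contDiff_id)).of_le (mod_cast le_top)).contDiffAt
    rw [h7, (continuousMultilinearCurryRightEquiv' ℝ k E' W₃).symm.norm_iteratedFDeriv_comp_left
      (fun x' =>
          iteratedFDeriv ℝ k (fun ξ' => B.precompR E' (p x' ξ') (q' ξ')) ξ
          + iteratedFDeriv ℝ k (fun ξ' => B.precompL E' (p' x' ξ') (q ξ')) ξ) x l]
    have h8 : iteratedFDeriv ℝ l (fun x' =>
          iteratedFDeriv ℝ k (fun ξ' => B.precompR E' (p x' ξ') (q' ξ')) ξ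
          + iteratedFDeriv ℝ k (fun ξ' => B.precompL E' (p' x' ξ') (q ξ')) ξ) x
        = iteratedFDeriv ℝ l (fun x' =>
            iteratedFDeriv ℝ k (fun ξ' => B.precompR E' (p x' ξ') (q' ξ')) ξ) x
          + iteratedFDeriv ℝ l (fun x' =>
              iteratedFDeriv ℝ k (fun ξ' => B.precompL E' (p' x' ξ') (q ξ')) ξ) x := by
      apply iteratedFDeriv_add_apply'
      · exact ((nested_slice (fun x ξ => B.precompR E' (p x ξ) (q' ξ)) hS1 k ξ).of_le (mod_cast le_top)).contDiffAt
      · exact ((nested_slice (fun x ξ => B.precompL E' (p' x ξ) (q ξ)) hS2 k ξ).of_le (mod_cast le_top)).contDiffAt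
    rw [h8]
    refine le_trans (norm_add_le _ _) ?_
    have e1 : ‖iteratedFDeriv ℝ l (fun x' =>
          iteratedFDeriv ℝ k (fun ξ' => B.precompR E' (p x' ξ') (q' ξ')) ξ) x‖
        ≤ C₁ * jap n ξ ^ ((μ + ν) - ρ * ((k:ℝ)+1) + δ * (l:ℝ)) := by
      refine le_trans (hC₁ x ξ) ?_
      apply mul_le_mul_of_nonneg_left _ hC₁0
      apply Real.rpow_le_rpow_of_exponent_le (one_le_jap ξ)
      have : (0:ℝ) ≤ 1 - ρ := by linarith
      nlinarith [this]
    have e2 : ‖iteratedFDeriv ℝ l (fun x' =>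
          iteratedFDeriv ℝ k (fun ξ' => B.precompL E' (p' x' ξ') (q ξ')) ξ) x‖
        ≤ C₂ * jap n ξ ^ ((μ + ν) - ρ * ((k:ℝ)+1) + δ * (l:ℝ)) := by
      refine le_trans (hC₂ x ξ) ?_
      apply le_of_eq
      congr 1
      ring
    have hcast : ((k+1 : ℕ):ℝ) = (k:ℝ) + 1 := by push_cast; ring
    rw [hcast]
    calc _ ≤ C₁ * jap n ξ ^ ((μ + ν) - ρ * ((k:ℝ)+1) + δ * (l:ℝ))
            + C₂ * jap n ξ ^ ((μ + ν) - ρ * ((k:ℝ)+1) + δ * (l:ℝ)) := add_le_add e1 e2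
      _ = (C₁ + C₂) * jap n ξ ^ ((μ + ν) - ρ * ((k:ℝ)+1) + δ * (l:ℝ)) := by ring

lemma two_pi_ne : (2 * Real.pi) ≠ 0 := by positivity

lemma uc_one_smul (c : ℝ) (η : E') : uc n 1 (c • η) = uc n c η := by
  unfold uc; rw [one_smul]

/-- The weight `w(η) = ⟨2πη⟩^{m'}` as a complex-valued function. -/
noncomputable def wC (n : ℕ) (m' : ℝ) (η : EuclideanSpace ℝ (Fin n)) : ℂ :=
  ((uc n (2 * Real.pi) η ^ (m'/2) : ℝ) : ℂ)

lemma wC_temperate (m' : ℝ) (hm'0 : m' ≤ 0) : Function.HasTemperateGrowth (wC n m') := by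
  constructor
  · have h1 : ContDiff ℝ ω (wC n m') := by
      have := (contDiff_uc_rpow (n := n) (2 * Real.pi) (m'/2))
      exact Complex.ofRealCLM.contDiff.comp this
    exact h1.of_le le_top
  · intro j
    obtain ⟨C, hC0, hC⟩ := ucs_iter_bound (n := n) (2 * Real.pi) two_pi_ne j (m'/2)
    refine ⟨0, C, ?_⟩
    intro x
    have h1 : wC n m' = ⇑(RCLike.ofRealLI (K := ℂ)) ∘ (fun ζ : E' => uc n (2*Real.pi) ζ ^ (m'/2)) := by
      funext ζ
      simp [wC, RCLike.ofRealLI_apply]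
    rw [h1, LinearIsometry.norm_iteratedFDeriv_comp_left _
      (contDiff_uc_rpow (2*Real.pi) (m'/2)).contDiffAt le_top]
    refine le_trans (hC j le_rfl x) ?_
    have h2 : uc n (2*Real.pi) x ^ (m'/2 - (j:ℝ)/2) ≤ 1 := by
      apply Real.rpow_le_one_of_one_le_of_nonpos (one_le_uc _ _)
      have : (0:ℝ) ≤ (j:ℝ) := Nat.cast_nonneg _
      linarith
    calc C * uc n (2*Real.pi) x ^ (m'/2 - (j:ℝ)/2) ≤ C * 1 :=
          mul_le_mul_of_nonneg_left h2 hC0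
      _ = C * (1 + ‖x‖) ^ (0:ℕ) := by norm_num

variable (m' : ℝ) (hm'0 : m' ≤ 0)

/-- the Schwartz function `g` with `ĝ(ξ) = ⟨ξ⟩^{m'} f̂(ξ)`. -/
noncomputable def gSch (m' : ℝ) (hm'0 : m' ≤ 0) (f : SchwartzMap (EuclideanSpace ℝ (Fin n)) ℂ) :
    SchwartzMap (EuclideanSpace ℝ (Fin n)) ℂ :=
  (FourierTransform.fourierCLE ℝ (SchwartzMap (EuclideanSpace ℝ (Fin n)) ℂ)).symm
    (bilinLeftCLM (ContinuousLinearMap.mul ℝ ℂ) (wC_temperate m' hm'0)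
      ((FourierTransform.fourierCLE ℝ (SchwartzMap (EuclideanSpace ℝ (Fin n)) ℂ)) f))

lemma paperFT_smul (h : E' → ℂ) (η : E') :
    paperFT n h ((2 * Real.pi) • η) = 𝓕 h η := by
  rw [Real.fourier_eq', paperFT]
  congr 1
  funext x
  rw [smul_eq_mul]
  congr 1
  rw [real_inner_smul_right]
  push_cast
  ring_nf

lemma ft_gSch (f : SchwartzMap (EuclideanSpace ℝ (Fin n)) ℂ) :
    𝓕 ⇑(gSch m' hm'0 f) = fun η => 𝓕 ⇑f η * wC n m' η := by
  have h1 := (FourierTransform.fourierCLE ℝ (SchwartzMap (EuclideanSpace ℝ (Fin n)) ℂ)).apply_symm_apply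
    (bilinLeftCLM (ContinuousLinearMap.mul ℝ ℂ) (wC_temperate m' hm'0)
      ((FourierTransform.fourierCLE ℝ (SchwartzMap (EuclideanSpace ℝ (Fin n)) ℂ)) f))
  conv_lhs => rw [← SchwartzMap.fourier_coe, ← FourierTransform.fourierCLE_apply (R := ℝ) (f := gSch m' hm'0 f)]
  rw [gSch, h1]
  rfl

lemma paperFT_gSch (f : SchwartzMap (EuclideanSpace ℝ (Fin n)) ℂ) (ξ : E') :
    paperFT n ⇑(gSch m' hm'0 f) ξ = ((jap n ξ ^ m' : ℝ) : ℂ) * paperFT n ⇑f ξ := by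
  have hη : (2 * Real.pi) • ((2 * Real.pi)⁻¹ • ξ) = ξ := by
    rw [smul_smul, mul_inv_cancel₀ two_pi_ne, one_smul]
  set η := (2 * Real.pi)⁻¹ • ξ with hηdef
  calc paperFT n ⇑(gSch m' hm'0 f) ξ = paperFT n ⇑(gSch m' hm'0 f) ((2 * Real.pi) • η) := by
        rw [hη]
    _ = 𝓕 ⇑(gSch m' hm'0 f) η := paperFT_smul _ _
    _ = 𝓕 ⇑f η * wC n m' η := by rw [ft_gSch]
    _ = ((jap n ξ ^ m' : ℝ) : ℂ) * paperFT n ⇑f ξ := by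
        rw [← paperFT_smul ⇑f η, hη, wC, ← uc_one_smul (2 * Real.pi) η, hη, ← jap_rpow]
        ring

lemma gSch_eq_Bop (f : SchwartzMap (EuclideanSpace ℝ (Fin n)) ℂ) :
    ⇑(gSch m' hm'0 f) = Bop n m' f := by
  funext x
  have hg : gSch m' hm'0 f x
      = 𝓕⁻ (⇑(bilinLeftCLM (ContinuousLinearMap.mul ℝ ℂ) (wC_temperate m' hm'0)
          ((FourierTransform.fourierCLE ℝ (SchwartzMap (EuclideanSpace ℝ (Fin n)) ℂ)) f))) x := by
    rw [gSch]
    rw [FourierTransform.fourierCLE_symm_apply, SchwartzMap.fourierInv_coe]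
  rw [hg, Real.fourierInv_eq']
  rw [Bop]
  set G : E' → ℂ := fun ξ => Complex.exp (Complex.I * ((inner ℝ x ξ : ℝ) : ℂ))
    * ((jap n ξ ^ m' : ℝ) : ℂ) * paperFT n (⇑f) ξ with hG
  have hcv := MeasureTheory.Measure.integral_comp_smul (μ := volume) G (2 * Real.pi)
  rw [show Module.finrank ℝ (EuclideanSpace ℝ (Fin n)) = n by
    rw [finrank_euclideanSpace, Fintype.card_fin]] at hcv
  have habs : |(((2 * Real.pi) ^ n : ℝ))⁻¹| = (((2 * Real.pi) ^ n : ℝ))⁻¹ := by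
    rw [abs_of_pos]; positivity
  rw [habs] at hcv
  have h3 : ((2 * Real.pi) ^ n : ℝ)⁻¹ • ∫ ξ, G ξ = ∫ η, G ((2 * Real.pi) • η) := by
    rw [hcv]
  rw [h3]
  congr 1
  funext η
  rw [hG]
  simp only
  have e1 : paperFT n ⇑f ((2 * Real.pi) • η) = 𝓕 ⇑f η := paperFT_smul _ _
  have e2 : ((jap n ((2 * Real.pi) • η) ^ m' : ℝ) : ℂ) = wC n m' η := by
    rw [jap_rpow, uc_one_smul, wC]
  have e3 : ((inner ℝ x ((2 * Real.pi) • η) : ℝ) : ℂ) = ((2 * Real.pi * (inner ℝ η x : ℝ) : ℝ) : ℂ) := by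
    rw [real_inner_smul_right, real_inner_comm]
  rw [e1, e2, e3, smul_eq_mul]
  have : (bilinLeftCLM (ContinuousLinearMap.mul ℝ ℂ) (wC_temperate m' hm'0)
      ((FourierTransform.fourierCLE ℝ (SchwartzMap (EuclideanSpace ℝ (Fin n)) ℂ)) f)) η = 𝓕 ⇑f η * wC n m' η := rfl
  rw [this]
  ring

end Stmt18Aux

/-- Let `a ∈ S^m_{ρ,δ}`, `φ ∈ Φ²` SND, `m' = m + n·max{0,(δ-ρ)/2} ≤ 0`.
Assuming (A) the `L²`-boundedness of FIOs with SND `Φ²` phases and amplitudes in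
`S^{-n max{0,(δ-ρ)/2}}_{ρ,δ}`, and (B) the Bessel potential bound
`‖(1-Δ)^{m'/2} g‖_{L²} ≤ C ‖g‖_{h^{2n/(n-2m')}}`, one has
`‖T_a^φ f‖_{L²} ≤ C ‖f‖_{h^{2n/(n-2m')}}` (the local Hardy quasi-norm entering only
through (B)). -/
theorem stmt18 (n : ℕ) (hn : 0 < n) (m ρ δ : ℝ)
    (hρ0 : 0 ≤ ρ) (hρ1 : ρ ≤ 1) (hδ0 : 0 ≤ δ) (hδ1 : δ < 1)
    (a : EuclideanSpace ℝ (Fin n) → EuclideanSpace ℝ (Fin n) → ℂ)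
    (φ : EuclideanSpace ℝ (Fin n) → EuclideanSpace ℝ (Fin n) → ℝ)
    (ha : SymbolClass n m ρ δ a) (hφ : Phi2Class n φ) (hSND : SNDClass n φ)
    (m' : ℝ) (hm' : m' = m + (n : ℝ) * max 0 ((δ - ρ) / 2)) (hm'0 : m' ≤ 0)
    (hpNorm : SchwartzMap (EuclideanSpace ℝ (Fin n)) ℂ → ℝ≥0∞)
    (HA : ∀ (ψ : EuclideanSpace ℝ (Fin n) → EuclideanSpace ℝ (Fin n) → ℝ)
        (b : EuclideanSpace ℝ (Fin n) → EuclideanSpace ℝ (Fin n) → ℂ),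
      Phi2Class n ψ → SNDClass n ψ →
      SymbolClass n (-(n : ℝ) * max 0 ((δ - ρ) / 2)) ρ δ b →
      ∃ C : ℝ, ∀ f : SchwartzMap (EuclideanSpace ℝ (Fin n)) ℂ,
        eLpNorm (FIOapp n b ψ f) 2 volume ≤ ENNReal.ofReal C * eLpNorm (⇑f) 2 volume)
    (HB : ∃ C : ℝ, ∀ g : SchwartzMap (EuclideanSpace ℝ (Fin n)) ℂ,
      eLpNorm (Bop n m' g) 2 volume ≤ ENNReal.ofReal C * hpNorm g) :
    ∃ C : ℝ, ∀ f : SchwartzMap (EuclideanSpace ℝ (Fin n)) ℂ,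
      eLpNorm (FIOapp n a φ f) 2 volume ≤ ENNReal.ofReal C * hpNorm f := by
  
  classical
  -- the multiplier `cc ξ = ⟨ξ⟩^{-m'}` (written via `uc`)
  set cc : EuclideanSpace ℝ (Fin n) → ℂ :=
    fun ξ => ((uc n 1 ξ ^ ((-m') / 2) : ℝ) : ℂ) with hccdef
  set b : EuclideanSpace ℝ (Fin n) → EuclideanSpace ℝ (Fin n) → ℂ :=
    fun x ξ => a x ξ * cc ξ with hbdef
  have hcc_smooth : ContDiff ℝ (⊤ : ℕ∞) cc :=
    (Complex.ofRealCLM.contDiff.comp (contDiff_uc_rpow 1 ((-m') / 2))).of_le le_top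
  have hMM : m + (-m') = -(n : ℝ) * max 0 ((δ - ρ) / 2) := by rw [hm']; ring
  -- Symbol class membership of `b`
  have hb : SymbolClass n (-(n : ℝ) * max 0 ((δ - ρ) / 2)) ρ δ b := by
    constructor
    · exact ha.1.mul (hcc_smooth.comp contDiff_snd)
    · intro k l
      have hpB : ∀ k' l' : ℕ, ∃ C : ℝ, 0 ≤ C ∧ ∀ x ξ : EuclideanSpace ℝ (Fin n),
          ‖iteratedFDeriv ℝ l' (fun x' => iteratedFDeriv ℝ k' (fun ξ' => a x' ξ') ξ) x‖
            ≤ C * jap n ξ ^ (m - ρ * (k':ℝ) + δ * (l':ℝ)) := by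
        intro k' l'
        obtain ⟨C, hC⟩ := ha.2 k' l'
        refine ⟨max C 0, le_max_right _ _, ?_⟩
        intro x ξ
        refine le_trans (hC x ξ) ?_
        exact mul_le_mul_of_nonneg_right (le_max_left _ _)
          (Real.rpow_nonneg (jap_pos ξ).le _)
      have hqB := fun j => cc_iter_bound (n := n) (-m') j
      have hK := key ρ δ hρ0 hρ1 k (ContinuousLinearMap.mul ℝ ℂ) a cc m (-m')
        ha.1 hcc_smooth hpB hqB l
      obtain ⟨C, hC0, hC⟩ := hK
      refine ⟨C, ?_⟩
      intro x ξ
      have hCb := hC x ξ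
      rw [← hMM]
      simpa only [ContinuousLinearMap.mul_apply'] using hCb
  obtain ⟨CA, hCA⟩ := HA φ b hφ hSND hb
  obtain ⟨CB, hCB⟩ := HB
  refine ⟨max CA 0 * max CB 0, ?_⟩
  intro f
  set g : SchwartzMap (EuclideanSpace ℝ (Fin n)) ℂ := gSch m' hm'0 f with hgdef
  -- the operator identity
  have hFIO : FIOapp n a φ f = FIOapp n b φ g := by
    funext x
    rw [FIOapp, FIOapp]
    congr 1
    congr 1
    funext ξ
    have hcc1 : cc ξ * ((jap n ξ ^ m' : ℝ) : ℂ) = 1 := by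
      rw [hccdef]
      rw [jap_rpow]
      rw [← Complex.ofReal_mul, ← Real.rpow_add (uc_pos 1 ξ)]
      norm_num
      rw [show (-m') / 2 + m' / 2 = 0 from by ring, Real.rpow_zero]
    rw [paperFT_gSch, hbdef]
    simp only
    linear_combination (-(Complex.exp (Complex.I * ((φ x ξ : ℝ) : ℂ)) * a x ξ
      * paperFT n (⇑f) ξ)) * hcc1
  -- conclude
  calc eLpNorm (FIOapp n a φ f) 2 volume
      = eLpNorm (FIOapp n b φ g) 2 volume := by rw [hFIO]
    _ ≤ ENNReal.ofReal CA * eLpNorm (⇑g) 2 volume := hCA g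
    _ = ENNReal.ofReal CA * eLpNorm (Bop n m' f) 2 volume := by
        rw [hgdef, gSch_eq_Bop]
    _ ≤ ENNReal.ofReal CA * (ENNReal.ofReal CB * hpNorm f) := by
        exact mul_le_mul_right (hCB f) _
    _ ≤ ENNReal.ofReal (max CA 0) * (ENNReal.ofReal (max CB 0) * hpNorm f) := by
        gcongr
        · exact le_max_left _ _
        · exact le_max_left _ _
    _ = ENNReal.ofReal (max CA 0 * max CB 0) * hpNorm f := by
        rw [ENNReal.ofReal_mul (le_max_right _ _), mul_assoc]
end
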